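/- arXiv:1906.02586 — 2 statements merged into one kernel-verified Lean document; each statement's English description precedes it below -/
import Mathlib

section
/- Let M ⊆ ℂ^N be a set containing p, let M' ⊆ ℂ^{N'} be a generic real-analytic submanifold with p' ∈ M', and let H be a holomorphic map on a neighborhood of p with H(p) = p' and H(M) ⊆ M' near p. Then {v ∈ ℂ^{N'} : there exists a holomorphic map Y near p with Y(p) = 0 such that for every ρ' ∈ I_{p'}(M') and every z ∈ M near p, 2·Re(∂ρ'(H(z)) · Y(z)) + (Dρ')_{H(z)}(v) = 0} is equal to {W(p) : W ∈ 𝔥𝔬𝔩(H)}, where (Dρ')_q(v) denotes the real directional derivative of ρ' at q in the direction v (regarding v ∈ ℂ^{N'} as a vector in ℝ^{2N'}). -/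
open Complex Topology

noncomputable section

/-- `ℂ^n`. -/
abbrev Cn (n : ℕ) : Type := EuclideanSpace ℂ (Fin n)

/-- `ℝ^m`. -/
abbrev Rm (m : ℕ) : Type := EuclideanSpace ℝ (Fin m)

/-- The vector of `ℂ^n` with entry `c` in the `j`-th coordinate and `0` elsewhere. -/
def cbasis {n : ℕ} (j : Fin n) (c : ℂ) : Cn n := EuclideanSpace.single j c

/-- The `j`-th component of the Wirtinger gradient `∂f(q)` of a real-valued function `f`. -/
def wirtD {n : ℕ} (f : Cn n → ℝ) (q : Cn n) : Fin n → ℂ := fun j =>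
  (1 / 2 : ℂ) * ((fderiv ℝ f q (cbasis j 1) : ℂ)
    - Complex.I * (fderiv ℝ f q (cbasis j Complex.I) : ℂ))

/-- The `j`-th component of `∂̄g(q)` for a complex-valued function `g`. -/
def wirtDBar {n : ℕ} (g : Cn n → ℂ) (q : Cn n) : Fin n → ℂ := fun j =>
  (1 / 2 : ℂ) * (fderiv ℝ g q (cbasis j 1) + Complex.I * fderiv ℝ g q (cbasis j Complex.I))

/-- The `j`-th component of `∂̄f(q)` for a real-valued function `f`. -/
def wirtDBarR {n : ℕ} (f : Cn n → ℝ) (q : Cn n) : Fin n → ℂ := fun j =>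
  (1 / 2 : ℂ) * ((fderiv ℝ f q (cbasis j 1) : ℂ)
    + Complex.I * (fderiv ℝ f q (cbasis j Complex.I) : ℂ))

/-- `M` is a generic real-analytic submanifold of codimension `d` near `p`. -/
def IsGenericAt {n : ℕ} (M : Set (Cn n)) (d : ℕ) (p : Cn n) : Prop :=
  p ∈ M ∧ ∃ (U : Set (Cn n)) (ρ : Cn n → Fin d → ℝ),
    IsOpen U ∧ p ∈ U ∧ (∀ k, AnalyticOnNhd ℝ (fun z => ρ z k) U) ∧
    (M ∩ U = {z | z ∈ U ∧ ∀ k, ρ z k = 0}) ∧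
    ∀ q ∈ M ∩ U, LinearIndependent ℂ (fun k : Fin d => wirtD (fun z => ρ z k) q)

/-- `S` is, near its point `q`, a real-analytic submanifold of (real) dimension `mdim`. -/
def IsRASubmanifoldAt {E : Type*} [NormedAddCommGroup E] [NormedSpace ℝ E]
    (S : Set E) (q : E) (mdim : ℕ) : Prop :=
  ∃ (c : ℕ) (U : Set E) (ρ : E → Fin c → ℝ),
    IsOpen U ∧ q ∈ U ∧ mdim + c = Module.finrank ℝ E ∧
    (∀ k, AnalyticOnNhd ℝ (fun z => ρ z k) U) ∧
    (S ∩ U = {z | z ∈ U ∧ ∀ k, ρ z k = 0}) ∧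
    ∀ x ∈ S ∩ U, LinearIndependent ℝ (fun k : Fin c => fderiv ℝ (fun z => ρ z k) x)

/-- The tangent space of a set at a point: the span of the tangent cone. -/
def tangentSpaceAt {E : Type*} [NormedAddCommGroup E] [NormedSpace ℝ E] (S : Set E) (q : E) :
    Submodule ℝ E := Submodule.span ℝ (tangentConeAt ℝ S q)

/-- Multiplication by `i` on `ℂ^n` as an `ℝ`-linear map. -/
def mulI {n : ℕ} : Cn n →ₗ[ℝ] Cn n :=
  (LinearMap.lsmul ℂ (Cn n) Complex.I).restrictScalars ℝ

/-- `M` (a generic submanifold of codimension `d`, hence of real dimension `2n - d`) is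
minimal at `p`: there is no real-analytic submanifold `S ⊆ M` through `p` of strictly
smaller dimension whose tangent spaces contain the complex tangent spaces of `M`. -/
def IsMinimalAt {n : ℕ} (M : Set (Cn n)) (d : ℕ) (p : Cn n) : Prop :=
  ¬ ∃ (S : Set (Cn n)) (mdim : ℕ), S ⊆ M ∧ p ∈ S ∧ mdim < 2 * n - d ∧
      (∀ q ∈ S, IsRASubmanifoldAt S q mdim) ∧
      ∀ q ∈ S, tangentSpaceAt M q ⊓ (tangentSpaceAt M q).map mulI ≤ tangentSpaceAt S q

/-- A real-analytic CR vector field of `M` near `p`. -/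
structure CRVectorField {N : ℕ} (M : Set (Cn N)) (p : Cn N) where
  coeff : Cn N → Fin N → ℂ
  dom : Set (Cn N)
  isOpen : IsOpen dom
  mem : p ∈ dom
  analytic : ∀ j, AnalyticOnNhd ℝ (fun z => coeff z j) dom
  tangent : ∀ (f : Cn N → ℝ) (U : Set (Cn N)), IsOpen U → p ∈ U → AnalyticOnNhd ℝ f U →
    (∀ z ∈ M ∩ U, f z = 0) →
    ∃ V, IsOpen V ∧ p ∈ V ∧ ∀ z ∈ M ∩ V, (∑ j, coeff z j * wirtDBarR f z j) = 0

/-- Application of a CR vector field to a complex-valued function. -/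
def CRVectorField.apply {N : ℕ} {M : Set (Cn N)} {p : Cn N} (L : CRVectorField M p)
    (g : Cn N → ℂ) : Cn N → ℂ := fun z => ∑ j, L.coeff z j * wirtDBar g z j

/-- Iterated application `L̄₁ ⋯ L̄ₖ g` of a list of CR vector fields. -/
def CRApplyList {N : ℕ} {M : Set (Cn N)} {p : Cn N} (Ls : List (CRVectorField M p))
    (g : Cn N → ℂ) : Cn N → ℂ := Ls.foldr CRVectorField.apply g

/-- `H` is finitely nondegenerate of order at most `ℓ` at `p` (as a map of `M` into `M'`). -/
def FinNondeg {N N' : ℕ} (M : Set (Cn N)) (p : Cn N) (M' : Set (Cn N')) (ℓ : ℕ)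
    (H : Cn N → Cn N') : Prop :=
  Submodule.span ℂ
    { v : Fin N' → ℂ | ∃ (Ls : List (CRVectorField M p)) (ρ' : Cn N' → ℝ) (U' : Set (Cn N')),
        Ls.length ≤ ℓ ∧ IsOpen U' ∧ H p ∈ U' ∧ AnalyticOnNhd ℝ ρ' U' ∧
        (∀ w ∈ M' ∩ U', ρ' w = 0) ∧
        v = fun j => CRApplyList Ls (fun z => wirtD ρ' (H z) j) p } = ⊤

/-- The mapping locus `E_ℓ ⊆ M'`. -/
def MappingLocus {N N' : ℕ} (M : Set (Cn N)) (p : Cn N) (M' : Set (Cn N')) (ℓ : ℕ) :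
    Set (Cn N') :=
  { p' | p' ∈ M' ∧ ∃ (Ω : Set (Cn N)) (H : Cn N → Cn N'),
      IsOpen Ω ∧ p ∈ Ω ∧ DifferentiableOn ℂ H Ω ∧ H p = p' ∧
      (∀ z ∈ M ∩ Ω, H z ∈ M') ∧ FinNondeg M p M' ℓ H }

/-- A semi-analytic subset of a real vector space. -/
def SemiAnalyticSet {E : Type*} [NormedAddCommGroup E] [NormedSpace ℝ E] (A : Set E) : Prop :=
  ∀ x : E, ∃ U : Set E, IsOpen U ∧ x ∈ U ∧
    ∃ (n k : ℕ) (f : Fin n → Fin k → E → ℝ) (iseq : Fin n → Fin k → Bool),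
      (∀ i j, AnalyticOnNhd ℝ (f i j) U) ∧
      A ∩ U = ⋃ i, ⋂ j, {x | x ∈ U ∧ if iseq i j then f i j x = 0 else 0 < f i j x}

/-- `A` is locally semi-analytic along `M'`. -/
def LocallySemiAnalyticOn {E : Type*} [NormedAddCommGroup E] [NormedSpace ℝ E]
    (M' A : Set E) : Prop :=
  ∀ q ∈ M', ∃ U : Set E, IsOpen U ∧ q ∈ U ∧ SemiAnalyticSet (A ∩ U)


/-! Since `2 Re(∂ρ'(q) · v) = (Dρ')_q(v)` for every real function `ρ'` and every `v`, the
condition defining the left-hand set for `(Y, v)` is the condition defining `𝔥𝔬𝔩(H)` for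
`Y + v`. Hence the two sets correspond under `Y ↦ Y + v` and `W ↦ W - W(p)`. -/

lemma sum_re_smul_add_im_smul_cbasis {n : ℕ} (v : Cn n) :
    ∑ j, ((v j).re • cbasis j 1 + (v j).im • cbasis j I) = v := by
  conv_rhs => rw [← (EuclideanSpace.basisFun (Fin n) ℂ).sum_repr v]
  refine Finset.sum_congr rfl fun j _ => ?_
  ext k
  by_cases h : k = j
  · subst h; simp [cbasis]
  · simp [cbasis, h]

lemma two_mul_re_sum_wirtD_mul {n : ℕ} (f : Cn n → ℝ) (q v : Cn n) :
    2 * (∑ j, wirtD f q j * v j).re = fderiv ℝ f q v := by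
  conv_rhs => rw [← sum_re_smul_add_im_smul_cbasis v]
  simp only [map_sum, map_add, map_smul, smul_eq_mul, Complex.re_sum, Finset.mul_sum, wirtD]
  refine Finset.sum_congr rfl fun j _ => ?_
  simp only [one_div, mul_re, inv_re, re_ofNat, normSq_ofNat, div_self_mul_self', sub_re, ofReal_re,
    I_re, zero_mul, I_im, ofReal_im, mul_zero, sub_self, sub_zero, inv_im, im_ofNat, neg_zero,
    zero_div, sub_im, mul_im, one_mul, zero_add, zero_sub, mul_neg, add_zero, neg_mul, sub_neg_eq_add]
  ring

lemma two_mul_re_sum_wirtD_mul_add {n : ℕ} (f : Cn n → ℝ) (q x v : Cn n) :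
    2 * (∑ j, wirtD f q j * (x + v) j).re
      = 2 * (∑ j, wirtD f q j * x j).re + fderiv ℝ f q v := by
  simp only [← two_mul_re_sum_wirtD_mul f q v, PiLp.add_apply, mul_add, Finset.sum_add_distrib,
    Complex.add_re]

theorem proj_infinitesimal_deformations_eq_hol_eval_general
    {N N' : ℕ} (M : Set (Cn N)) (p : Cn N) (M' : Set (Cn N')) (p' : Cn N')
    (H : Cn N → Cn N') :
    { v : Cn N' | ∃ (ΩY : Set (Cn N)) (Y : Cn N → Cn N'), IsOpen ΩY ∧ p ∈ ΩY ∧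
        DifferentiableOn ℂ Y ΩY ∧ Y p = 0 ∧
        ∀ (ρ' : Cn N' → ℝ) (U' : Set (Cn N')), IsOpen U' → p' ∈ U' →
          AnalyticOnNhd ℝ ρ' U' → (∀ w ∈ M' ∩ U', ρ' w = 0) →
          ∃ V, IsOpen V ∧ p ∈ V ∧ ∀ z ∈ M ∩ V,
            2 * (∑ j, wirtD ρ' (H z) j * Y z j).re + fderiv ℝ ρ' (H z) v = 0 }
    = { c : Cn N' | ∃ (ΩW : Set (Cn N)) (W : Cn N → Cn N'), IsOpen ΩW ∧ p ∈ ΩW ∧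
        DifferentiableOn ℂ W ΩW ∧ W p = c ∧
        ∀ (ρ' : Cn N' → ℝ) (U' : Set (Cn N')), IsOpen U' → p' ∈ U' →
          AnalyticOnNhd ℝ ρ' U' → (∀ w ∈ M' ∩ U', ρ' w = 0) →
          ∃ V, IsOpen V ∧ p ∈ V ∧ ∀ z ∈ M ∩ V,
            (∑ j, wirtD ρ' (H z) j * W z j).re = 0 } := by
  ext v
  constructor
  · rintro ⟨ΩY, Y, hΩY, hpY, hY, hYp, hYhol⟩
    refine ⟨ΩY, fun z => Y z + v, hΩY, hpY, hY.add_const v, by simp [hYp], ?_⟩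
    intro ρ' U' hU' hpU' hρ' hρ'M'
    obtain ⟨V, hV, hpV, hYV⟩ := hYhol ρ' U' hU' hpU' hρ' hρ'M'
    refine ⟨V, hV, hpV, fun z hz => ?_⟩
    have := two_mul_re_sum_wirtD_mul_add ρ' (H z) (Y z) v
    linarith [hYV z hz]
  · rintro ⟨ΩW, W, hΩW, hpW, hW, rfl, hWhol⟩
    refine ⟨ΩW, fun z => W z - W p, hΩW, hpW, hW.sub_const (W p), sub_self _, ?_⟩
    intro ρ' U' hU' hpU' hρ' hρ'M'
    obtain ⟨V, hV, hpV, hWV⟩ := hWhol ρ' U' hU' hpU' hρ' hρ'M'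
    refine ⟨V, hV, hpV, fun z hz => ?_⟩
    have := two_mul_re_sum_wirtD_mul_add ρ' (H z) (W z - W p) (W p)
    rw [sub_add_cancel] at this
    linarith [hWV z hz]

/-- **Corollary 2.12.** The projection to the first factor of the space of infinitesimal
deformations of `H` into the base-point-type deformation of `M'` equals
`𝔥𝔬𝔩(H)(p) = {W(p) : W ∈ 𝔥𝔬𝔩(H)}`. -/
theorem proj_infinitesimal_deformations_eq_hol_eval
    {N N' d' : ℕ} (M : Set (Cn N)) (p : Cn N) (hpM : p ∈ M)
    (M' : Set (Cn N')) (hM' : ∀ q ∈ M', IsGenericAt M' d' q)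
    (p' : Cn N') (hp' : p' ∈ M')
    (H : Cn N → Cn N') (Ω : Set (Cn N)) (hΩ : IsOpen Ω) (hpΩ : p ∈ Ω)
    (hH : DifferentiableOn ℂ H Ω) (hHp : H p = p') (hHM : ∀ z ∈ M ∩ Ω, H z ∈ M') :
    { v : Cn N' | ∃ (ΩY : Set (Cn N)) (Y : Cn N → Cn N'), IsOpen ΩY ∧ p ∈ ΩY ∧
        DifferentiableOn ℂ Y ΩY ∧ Y p = 0 ∧
        ∀ (ρ' : Cn N' → ℝ) (U' : Set (Cn N')), IsOpen U' → p' ∈ U' →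
          AnalyticOnNhd ℝ ρ' U' → (∀ w ∈ M' ∩ U', ρ' w = 0) →
          ∃ V, IsOpen V ∧ p ∈ V ∧ ∀ z ∈ M ∩ V,
            2 * (∑ j, wirtD ρ' (H z) j * Y z j).re + fderiv ℝ ρ' (H z) v = 0 }
    = { c : Cn N' | ∃ (ΩW : Set (Cn N)) (W : Cn N → Cn N'), IsOpen ΩW ∧ p ∈ ΩW ∧
        DifferentiableOn ℂ W ΩW ∧ W p = c ∧
        ∀ (ρ' : Cn N' → ℝ) (U' : Set (Cn N')), IsOpen U' → p' ∈ U' →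
          AnalyticOnNhd ℝ ρ' U' → (∀ w ∈ M' ∩ U', ρ' w = 0) →
          ∃ V, IsOpen V ∧ p ∈ V ∧ ∀ z ∈ M ∩ V,
            (∑ j, wirtD ρ' (H z) j * W z j).re = 0 } :=
  proj_infinitesimal_deformations_eq_hol_eval_general M p M' p' H

end
end

section
/- Let M = {(z,w) ∈ ℂ² : Im w = |z|² + |z|⁴} and M' = {(z₁,z₂,w) ∈ ℂ³ : Im w = |z₁|² + |z₁|⁴ + (Re z₁)² · Im z₂}. For every (s,t) ∈ ℝ², the map H_{s,t}(z,w) = (z, t, w + s) is holomorphic on ℂ², maps M into M', and is finitely nondegenerate of order at most 2 at the point 0 ∈ M. -/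
open Complex Topology

noncomputable section

/-- The hypersurface `M = {Im w = |z|² + |z|⁴} ⊆ ℂ²`. -/
def Mex : Set (Cn 2) :=
  {v | (v 1).im = Complex.normSq (v 0) + (Complex.normSq (v 0)) ^ 2}

/-- The hypersurface `M' = {Im w = |z₁|² + |z₁|⁴ + (Re z₁)² Im z₂} ⊆ ℂ³`. -/
def Mex' : Set (Cn 3) :=
  {u | (u 2).im = Complex.normSq (u 0) + (Complex.normSq (u 0)) ^ 2
      + ((u 0).re) ^ 2 * (u 1).im}

/-- The family of maps `H_{s,t}(z,w) = (z, t, w + s)`. -/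
def Hex (s t : ℝ) : Cn 2 → Cn 3 := fun v =>
  (WithLp.equiv 2 (Fin 3 → ℂ)).symm ![v 0, (t : ℂ), v 1 + (s : ℂ)]

/-! ### Chunk 1 : generic helpers -/

def projR {n : ℕ} (j : Fin n) : Cn n →L[ℝ] ℂ :=
  (EuclideanSpace.proj j : Cn n →L[ℂ] ℂ).restrictScalars ℝ

@[simp] lemma projR_apply {n : ℕ} (j : Fin n) (v : Cn n) : projR j v = v j := rfl

@[simp] lemma projR_cbasis {n : ℕ} (j k : Fin n) (c : ℂ) :
    projR j (cbasis k c) = if j = k then c else 0 := by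
  show (EuclideanSpace.single k c) j = _
  simp [EuclideanSpace.single_apply]

lemma wirtD_eq {n : ℕ} {f : Cn n → ℝ} {q : Cn n} {D : Cn n →L[ℝ] ℝ}
    (h : HasFDerivAt f D q) (j : Fin n) :
    wirtD f q j = (1/2 : ℂ) * ((D (cbasis j 1) : ℂ) - Complex.I * (D (cbasis j Complex.I) : ℂ)) := by
  rw [wirtD, h.fderiv]

lemma wirtDBar_eq {n : ℕ} {g : Cn n → ℂ} {q : Cn n} {D : Cn n →L[ℝ] ℂ}
    (h : HasFDerivAt g D q) (j : Fin n) :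
    wirtDBar g q j = (1/2 : ℂ) * (D (cbasis j 1) + Complex.I * D (cbasis j Complex.I)) := by
  rw [wirtDBar, h.fderiv]

lemma wirtDBarR_eq {n : ℕ} {f : Cn n → ℝ} {q : Cn n} {D : Cn n →L[ℝ] ℝ}
    (h : HasFDerivAt f D q) (j : Fin n) :
    wirtDBarR f q j = (1/2 : ℂ) * ((D (cbasis j 1) : ℂ) + Complex.I * (D (cbasis j Complex.I) : ℂ)) := by
  rw [wirtDBarR, h.fderiv]

@[simp] lemma wirtDBar_const {n : ℕ} (c : ℂ) (q : Cn n) (j : Fin n) :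
    wirtDBar (fun _ => c) q j = 0 := by
  rw [wirtDBar_eq (hasFDerivAt_const c q) j]; simp

lemma hasFDerivAt_coord {n : ℕ} (j : Fin n) {φ : ℂ → ℂ} {D : ℂ →L[ℝ] ℂ} {v : Cn n}
    (h : HasFDerivAt φ D (v j)) :
    HasFDerivAt (fun v : Cn n => φ (v j)) (D.comp (projR j)) v :=
  h.comp v (projR j).hasFDerivAt

lemma hasFDerivAt_coordR {n : ℕ} (j : Fin n) {φ : ℂ → ℝ} {D : ℂ →L[ℝ] ℝ} {v : Cn n}
    (h : HasFDerivAt φ D (v j)) :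
    HasFDerivAt (fun v : Cn n => φ (v j)) (D.comp (projR j)) v :=
  h.comp v (projR j).hasFDerivAt

@[simp] lemma cbasis_apply {n : ℕ} (j : Fin n) (c : ℂ) (k : Fin n) :
    cbasis j c k = if k = j then c else 0 := EuclideanSpace.single_apply j c k
/-! ### Chunk 2 : the defining function of `M'` and its Wirtinger gradient -/

/-- `|z|² + |z|⁴` in real-coordinate form. -/
def phiR : ℂ → ℝ := fun z => (z.re*z.re + z.im*z.im) + (z.re*z.re + z.im*z.im)*(z.re*z.re + z.im*z.im)

lemma phiR_eq (z : ℂ) : phiR z = Complex.normSq z + (Complex.normSq z)^2 := by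
  simp [phiR, Complex.normSq_apply]; ring

/-- The derivative of `phiR`. -/
def DphiR (z : ℂ) : ℂ →L[ℝ] ℝ :=
  (1 + 2*(z.re*z.re + z.im*z.im)) •
    ((2*z.re) • Complex.reCLM + (2*z.im) • Complex.imCLM)

@[simp] lemma DphiR_apply (z h : ℂ) :
    DphiR z h = (1 + 2*(z.re*z.re + z.im*z.im)) * (2*z.re*h.re + 2*z.im*h.im) := by
  simp [DphiR]; ring

lemma hasFDerivAt_phiR (z : ℂ) : HasFDerivAt phiR (DphiR z) z := by
  have h := ((Complex.reCLM.hasFDerivAt (x := z)).mul (Complex.reCLM.hasFDerivAt)).add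
    ((Complex.imCLM.hasFDerivAt (x := z)).mul (Complex.imCLM.hasFDerivAt))
  have h2 := h.add (h.mul h)
  refine h2.congr_fderiv ?_
  ext h
  simp [DphiR]
  ring

/-- The defining function of `M'`. -/
def rho' : Cn 3 → ℝ := fun u => (u 2).im - phiR (u 0) - ((u 0).re*(u 0).re)*(u 1).im

def Drho' (u : Cn 3) : Cn 3 →L[ℝ] ℝ :=
  (Complex.imCLM.comp (projR 2)) - ((DphiR (u 0)).comp (projR 0))
  - ( ((u 0).re*(u 0).re) • (Complex.imCLM.comp (projR 1))
    + (u 1).im • ((2*(u 0).re) • (Complex.reCLM.comp (projR 0))) )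

lemma hasFDerivAt_rho' (u : Cn 3) : HasFDerivAt rho' (Drho' u) u := by
  have hx : HasFDerivAt (fun u : Cn 3 => (u 0).re) (Complex.reCLM.comp (projR 0)) u :=
    (Complex.reCLM.comp (projR 0)).hasFDerivAt
  have hb : HasFDerivAt (fun u : Cn 3 => (u 1).im) (Complex.imCLM.comp (projR 1)) u :=
    (Complex.imCLM.comp (projR 1)).hasFDerivAt
  have hd : HasFDerivAt (fun u : Cn 3 => (u 2).im) (Complex.imCLM.comp (projR 2)) u :=
    (Complex.imCLM.comp (projR 2)).hasFDerivAt
  have hphi : HasFDerivAt (fun u : Cn 3 => phiR (u 0)) ((DphiR (u 0)).comp (projR 0)) u :=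
    hasFDerivAt_coordR 0 (hasFDerivAt_phiR _)
  have h := (hd.sub hphi).sub ((hx.mul hx).mul hb)
  refine h.congr_fderiv ?_
  ext w
  simp [Drho']
  ring

lemma wirtD_rho'_0 (u : Cn 3) :
    wirtD rho' u 0 = -(1+2*(((u 0).re:ℂ)*((u 0).re:ℂ) + ((u 0).im:ℂ)*((u 0).im:ℂ)))
      * (((u 0).re:ℂ) - ((u 0).im:ℂ)*Complex.I) - ((u 0).re:ℂ)*((u 1).im:ℂ) := by
  rw [wirtD_eq (hasFDerivAt_rho' u) 0]
  simp [Drho']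
  ring

lemma wirtD_rho'_1 (u : Cn 3) :
    wirtD rho' u 1 = Complex.I/2 * (((u 0).re:ℂ) * ((u 0).re:ℂ)) := by
  rw [wirtD_eq (hasFDerivAt_rho' u) 1]
  simp [Drho']
  ring

lemma wirtD_rho'_2 (u : Cn 3) :
    wirtD rho' u 2 = -(Complex.I/2) := by
  rw [wirtD_eq (hasFDerivAt_rho' u) 2]
  simp [Drho']
  ring
/-! ### Chunk 3 : ∂̄-computations on `ℂ²` -/

def RX : ℂ →L[ℝ] ℂ := Complex.ofRealCLM.comp Complex.reCLM
def RY : ℂ →L[ℝ] ℂ := Complex.ofRealCLM.comp Complex.imCLM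

@[simp] lemma RX_apply (z : ℂ) : RX z = (z.re : ℂ) := rfl
@[simp] lemma RY_apply (z : ℂ) : RY z = (z.im : ℂ) := rfl

lemma bar0 (v : Cn 2) (k : Fin 2) :
    wirtDBar (fun w : Cn 2 => -((1+2*(RX (w 0)*RX (w 0)+RY (w 0)*RY (w 0)))
        *(RX (w 0) - RY (w 0)*Complex.I))) v k
      = if k = 0 then -1 - 4*(RX (v 0)*RX (v 0)+RY (v 0)*RY (v 0)) else 0 := by
  have hd := (((((RX.hasFDerivAt (x := v 0)).mul RX.hasFDerivAt).add
      ((RY.hasFDerivAt (x := v 0)).mul RY.hasFDerivAt)).const_mul (2:ℂ)).const_add 1).mul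
      ((RX.hasFDerivAt (x := v 0)).sub ((RY.hasFDerivAt (x := v 0)).mul_const Complex.I)) |>.neg
  rw [wirtDBar_eq (g := fun w : Cn 2 => -((1+2*(RX (w 0)*RX (w 0)+RY (w 0)*RY (w 0)))
        *(RX (w 0) - RY (w 0)*Complex.I))) (hasFDerivAt_coord 0 hd) k]
  fin_cases k
  · simp
    ring_nf
    try (simp only [Complex.I_sq]; ring)
  · simp

lemma bar0' (v : Cn 2) (k : Fin 2) :
    wirtDBar (fun w : Cn 2 => -1 - 4*(RX (w 0)*RX (w 0)+RY (w 0)*RY (w 0))) v k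
      = if k = 0 then -4*(RX (v 0) + RY (v 0)*Complex.I) else 0 := by
  have hd := ((((RX.hasFDerivAt (x := v 0)).mul RX.hasFDerivAt).add
      ((RY.hasFDerivAt (x := v 0)).mul RY.hasFDerivAt)).const_mul (4:ℂ)).const_sub (-1)
  rw [wirtDBar_eq (g := fun w : Cn 2 => -1 - 4*(RX (w 0)*RX (w 0)+RY (w 0)*RY (w 0)))
    (hasFDerivAt_coord 0 hd) k]
  fin_cases k
  · simp
    ring_nf
    linear_combination (-4 : ℂ) * Complex.re_add_im (v 0)
  · simp

lemma bar1 (v : Cn 2) (k : Fin 2) :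
    wirtDBar (fun w : Cn 2 => Complex.I/2 * (RX (w 0)*RX (w 0))) v k
      = if k = 0 then Complex.I/2 * RX (v 0) else 0 := by
  have hd := ((RX.hasFDerivAt (x := v 0)).mul RX.hasFDerivAt).const_mul (Complex.I/2)
  rw [wirtDBar_eq (g := fun w : Cn 2 => Complex.I/2 * (RX (w 0)*RX (w 0))) (hasFDerivAt_coord 0 hd) k]
  fin_cases k
  · simp
    ring_nf
  · simp

lemma bar1' (v : Cn 2) (k : Fin 2) :
    wirtDBar (fun w : Cn 2 => Complex.I/2 * RX (w 0)) v k
      = if k = 0 then Complex.I/4 else 0 := by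
  have hd := (RX.hasFDerivAt (x := v 0)).const_mul (Complex.I/2)
  rw [wirtDBar_eq (hasFDerivAt_coord 0 hd) k]
  fin_cases k
  · simp
    ring_nf
  · simp
/-! ### Chunk 4 : coordinates of `Cn 2`, curves in `Mex`, and the CR vector field -/

@[simp] lemma equiv2_symm_apply (x : Fin 2 → ℂ) (j : Fin 2) :
    ((WithLp.equiv 2 (Fin 2 → ℂ)).symm x) j = x j := rfl

@[simp] lemma equiv3_symm_apply (x : Fin 3 → ℂ) (j : Fin 3) :
    ((WithLp.equiv 2 (Fin 3 → ℂ)).symm x) j = x j := rfl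

@[simp] lemma Cn_add_apply {n : ℕ} (a b : Cn n) (j : Fin n) : (a + b) j = a j + b j := rfl
@[simp] lemma Cn_smul_apply {n : ℕ} (τ : ℝ) (a : Cn n) (j : Fin n) : (τ • a) j = τ • a j := rfl
@[simp] lemma Cn_zero_apply {n : ℕ} (j : Fin n) : (0 : Cn n) j = 0 := rfl

lemma fderiv_zero_of_curve {f : Cn 2 → ℝ} {q : Cn 2} (hfd : DifferentiableAt ℝ f q)
    {U : Set (Cn 2)} (hU : IsOpen U) (hqU : q ∈ U) (h0 : ∀ z ∈ Mex ∩ U, f z = 0)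
    (γ : ℝ → Cn 2) (w : Cn 2) (hγ : HasDerivAt γ w 0) (hγ0 : γ 0 = q)
    (hγM : ∀ τ, γ τ ∈ Mex) : fderiv ℝ f q w = 0 := by
  have hev : ∀ᶠ τ in 𝓝 (0:ℝ), γ τ ∈ U :=
    hγ.continuousAt.preimage_mem_nhds (hU.mem_nhds (hγ0 ▸ hqU))
  have h1 : HasDerivAt (f ∘ γ) (fderiv ℝ f (γ 0) w) 0 :=
    ((hγ0.symm ▸ hfd : DifferentiableAt ℝ f (γ 0)).hasFDerivAt).comp_hasDerivAt 0 hγ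
  have h2 : (f ∘ γ) =ᶠ[𝓝 (0:ℝ)] (fun _ => 0) :=
    hev.mono (fun τ hτ => h0 _ ⟨hγM τ, hτ⟩)
  rw [← hγ0]
  exact (h1.congr_of_eventuallyEq h2.symm).unique (hasDerivAt_const (0:ℝ) (0:ℝ))

/-- The coefficients of the CR vector field of `Mex`. -/
def Lcoeff : Cn 2 → Fin 2 → ℂ := fun v =>
  ![1, -2*Complex.I*(v 0)*(1 + 2*(RX (v 0)*RX (v 0) + RY (v 0)*RY (v 0)))]

/-- The `w`-translation curve. -/
lemma key_w {f : Cn 2 → ℝ} {q : Cn 2} (hfd : DifferentiableAt ℝ f q)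
    {U : Set (Cn 2)} (hU : IsOpen U) (hqU : q ∈ U) (h0 : ∀ z ∈ Mex ∩ U, f z = 0)
    (hq : q ∈ Mex) : fderiv ℝ f q (cbasis 1 1) = 0 := by
  refine fderiv_zero_of_curve hfd hU hqU h0 (fun τ => q + τ • cbasis 1 1) _ ?_ (by simp) ?_
  · simpa using ((hasDerivAt_id (0:ℝ)).smul_const (cbasis 1 1)).const_add q
  · intro τ
    simp only [Mex, Set.mem_setOf_eq] at hq ⊢
    simp [hq, Complex.add_im, Complex.smul_re]

lemma equiv_symm_as_cbasis (c : ℂ) (a : ℝ) :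
    (WithLp.equiv 2 (Fin 2 → ℂ)).symm ![c, Complex.I*(a:ℂ)]
      = cbasis 0 c + a • cbasis 1 Complex.I := by
  ext j
  fin_cases j <;> simp [Complex.real_smul] <;> ring

lemma key_z {f : Cn 2 → ℝ} {q : Cn 2} (hfd : DifferentiableAt ℝ f q)
    {U : Set (Cn 2)} (hU : IsOpen U) (hqU : q ∈ U) (h0 : ∀ z ∈ Mex ∩ U, f z = 0)
    (hq : q ∈ Mex) (c : ℂ) :
    fderiv ℝ f q (cbasis 0 c)
      = -((1+2*((q 0).re*(q 0).re+(q 0).im*(q 0).im))*(2*(q 0).re*c.re+2*(q 0).im*c.im))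
        * fderiv ℝ f q (cbasis 1 Complex.I) := by
  set γ : ℝ → Cn 2 := fun τ => (WithLp.equiv 2 (Fin 2 → ℂ)).symm
    ![q 0 + c*(τ:ℝ), q 1 + Complex.I*((phiR (q 0 + c*(τ:ℝ)) - phiR (q 0) : ℝ) : ℂ)] with hγdef
  have hline : HasDerivAt (fun τ : ℝ => q 0 + c*(τ:ℂ)) c 0 := by
    simpa using (Complex.ofRealCLM.hasDerivAt (x := (0:ℝ))).const_mul c |>.const_add (q 0)
  have hφτ : HasDerivAt (fun τ : ℝ => phiR (q 0 + c*(τ:ℂ))) (DphiR (q 0) c) 0 := by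
    have h := (hasFDerivAt_phiR (q 0 + c*((0:ℝ):ℂ))).comp_hasDerivAt 0 hline
    simp only [Complex.ofReal_zero, mul_zero, add_zero] at h
    exact h
  have h2 : HasDerivAt (fun τ : ℝ => q 1 + Complex.I*((phiR (q 0 + c*(τ:ℝ)) - phiR (q 0) : ℝ) : ℂ))
      (Complex.I * ((DphiR (q 0) c : ℝ) : ℂ)) 0 := by
    have h := ((Complex.ofRealCLM.hasFDerivAt.comp_hasDerivAt 0
      (hφτ.sub_const (phiR (q 0)))).const_mul Complex.I).const_add (q 1)
    simpa [Function.comp] using h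
  have hF : HasDerivAt (fun τ : ℝ => (![q 0 + c*(τ:ℝ),
        q 1 + Complex.I*((phiR (q 0 + c*(τ:ℝ)) - phiR (q 0) : ℝ) : ℂ)] : Fin 2 → ℂ))
      ![c, Complex.I * ((DphiR (q 0) c : ℝ) : ℂ)] 0 := by
    rw [hasDerivAt_pi]
    intro i
    fin_cases i
    · simpa using hline
    · simpa using h2
  have hγ : HasDerivAt γ ((WithLp.equiv 2 (Fin 2 → ℂ)).symm
      ![c, Complex.I * ((DphiR (q 0) c : ℝ) : ℂ)]) 0 :=
    HasFDerivAt.comp_hasDerivAt 0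
      ((PiLp.continuousLinearEquiv 2 ℝ (fun _ : Fin 2 => ℂ)).symm.toContinuousLinearMap.hasFDerivAt) hF
  have hγ0 : γ 0 = q := by
    ext j
    fin_cases j <;> simp [hγdef]
  have hγM : ∀ τ, γ τ ∈ Mex := by
    intro τ
    have h1 : (γ τ) 1 = q 1 + Complex.I*((phiR (q 0 + c*(τ:ℝ)) - phiR (q 0) : ℝ) : ℂ) := rfl
    have h0' : (γ τ) 0 = q 0 + c*(τ:ℝ) := rfl
    have hq' : (q 1).im = phiR (q 0) := by rw [phiR_eq]; exact hq
    simp only [Mex, Set.mem_setOf_eq, h1, h0']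
    rw [← phiR_eq (q 0 + c*(τ:ℝ))]
    simp [Complex.add_im, Complex.mul_im, hq']
  have hkey := fderiv_zero_of_curve hfd hU hqU h0 γ _ hγ hγ0 hγM
  rw [equiv_symm_as_cbasis, map_add, map_smul] at hkey
  simp only [smul_eq_mul] at hkey
  have := DphiR_apply (q 0) c
  rw [this] at hkey
  linarith [hkey]

lemma Ltangent : ∀ (f : Cn 2 → ℝ) (U : Set (Cn 2)), IsOpen U → (0:Cn 2) ∈ U →
    AnalyticOnNhd ℝ f U → (∀ z ∈ Mex ∩ U, f z = 0) →
    ∃ V, IsOpen V ∧ (0:Cn 2) ∈ V ∧ ∀ z ∈ Mex ∩ V, (∑ j, Lcoeff z j * wirtDBarR f z j) = 0 := by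
  intro f U hU h0U hf hfz
  refine ⟨U, hU, h0U, ?_⟩
  rintro q ⟨hqM, hqU⟩
  have hfd : DifferentiableAt ℝ f q := (hf q hqU).differentiableAt
  have hw := key_w hfd hU hqU hfz hqM
  have h1 := key_z hfd hU hqU hfz hqM 1
  have hI := key_z hfd hU hqU hfz hqM Complex.I
  simp only [Complex.one_re, Complex.one_im, Complex.I_re, Complex.I_im] at h1 hI
  rw [Fin.sum_univ_two]
  simp only [wirtDBarR]
  rw [hw, h1, hI]
  simp [Lcoeff]
  ring_nf
  linear_combination (-((fderiv ℝ f q (cbasis 1 Complex.I) : ℝ):ℂ) * (q 0)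
      * (1 + 2*(((q 0).re:ℂ))^2 + 2*(((q 0).im:ℂ))^2)) * Complex.I_sq
    + (-((fderiv ℝ f q (cbasis 1 Complex.I) : ℝ):ℂ)
      * (1 + 2*(((q 0).re:ℂ))^2 + 2*(((q 0).im:ℂ))^2)) * Complex.re_add_im (q 0)
/-! ### Chunk 5 : the CR vector field and analyticity facts -/

def Lfield : CRVectorField Mex (0 : Cn 2) where
  coeff := Lcoeff
  dom := Set.univ
  isOpen := isOpen_univ
  mem := Set.mem_univ _
  analytic := by
    intro j
    have aZ : AnalyticOnNhd ℝ (fun v : Cn 2 => v 0) Set.univ := (projR 0).analyticOnNhd _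
    have aX : AnalyticOnNhd ℝ (fun v : Cn 2 => RX (v 0)) Set.univ :=
      (RX.comp (projR 0)).analyticOnNhd _
    have aY : AnalyticOnNhd ℝ (fun v : Cn 2 => RY (v 0)) Set.univ :=
      (RY.comp (projR 0)).analyticOnNhd _
    fin_cases j
    · exact analyticOnNhd_const
    · exact (analyticOnNhd_const.mul aZ).mul
        (analyticOnNhd_const.add (analyticOnNhd_const.mul ((aX.mul aX).add (aY.mul aY))))
  tangent := Ltangent

lemma rho'_analytic : AnalyticOnNhd ℝ rho' Set.univ := by
  have aX : AnalyticOnNhd ℝ (fun u : Cn 3 => (u 0).re) Set.univ :=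
    (Complex.reCLM.comp (projR 0)).analyticOnNhd _
  have aY : AnalyticOnNhd ℝ (fun u : Cn 3 => (u 0).im) Set.univ :=
    (Complex.imCLM.comp (projR 0)).analyticOnNhd _
  have aB : AnalyticOnNhd ℝ (fun u : Cn 3 => (u 1).im) Set.univ :=
    (Complex.imCLM.comp (projR 1)).analyticOnNhd _
  have aD : AnalyticOnNhd ℝ (fun u : Cn 3 => (u 2).im) Set.univ :=
    (Complex.imCLM.comp (projR 2)).analyticOnNhd _
  have aN : AnalyticOnNhd ℝ (fun u : Cn 3 => (u 0).re*(u 0).re + (u 0).im*(u 0).im) Set.univ :=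
    (aX.mul aX).add (aY.mul aY)
  exact (aD.sub (aN.add (aN.mul aN))).sub ((aX.mul aX).mul aB)

lemma rho'_vanish : ∀ w ∈ Mex' ∩ (Set.univ : Set (Cn 3)), rho' w = 0 := by
  rintro w ⟨hw, -⟩
  simp only [Mex', Set.mem_setOf_eq] at hw
  simp only [rho', phiR_eq]
  rw [hw]
  ring

lemma g0_eq (s t : ℝ) : (fun z : Cn 2 => wirtD rho' (Hex s t z) 0)
    = fun w : Cn 2 => -((1+2*(RX (w 0)*RX (w 0)+RY (w 0)*RY (w 0)))
        *(RX (w 0) - RY (w 0)*Complex.I)) := by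
  funext v
  rw [wirtD_rho'_0]
  have h0 : (Hex s t v) 0 = v 0 := rfl
  have h1 : (Hex s t v) 1 = (t:ℂ) := rfl
  rw [h0, h1]
  simp
  ring

lemma g1_eq (s t : ℝ) : (fun z : Cn 2 => wirtD rho' (Hex s t z) 1)
    = fun w : Cn 2 => Complex.I/2 * (RX (w 0)*RX (w 0)) := by
  funext v
  rw [wirtD_rho'_1]
  have h0 : (Hex s t v) 0 = v 0 := rfl
  rw [h0]
  simp

lemma g2_eq (s t : ℝ) : (fun z : Cn 2 => wirtD rho' (Hex s t z) 2)
    = fun _ : Cn 2 => -(Complex.I/2) := by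
  funext v
  rw [wirtD_rho'_2]

lemma Lapply_cf0 : Lfield.apply (fun w : Cn 2 => -((1+2*(RX (w 0)*RX (w 0)+RY (w 0)*RY (w 0)))
        *(RX (w 0) - RY (w 0)*Complex.I)))
    = fun w : Cn 2 => -1 - 4*(RX (w 0)*RX (w 0)+RY (w 0)*RY (w 0)) := by
  funext v
  simp only [CRVectorField.apply, Lfield]
  rw [Fin.sum_univ_two, bar0 v 0, bar0 v 1]
  simp [Lcoeff]

lemma Lapply_cf1 : Lfield.apply (fun w : Cn 2 => Complex.I/2 * (RX (w 0)*RX (w 0)))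
    = fun w : Cn 2 => Complex.I/2 * RX (w 0) := by
  funext v
  simp only [CRVectorField.apply, Lfield]
  rw [Fin.sum_univ_two, bar1 v 0, bar1 v 1]
  simp [Lcoeff]

lemma Lapply_cf2 : Lfield.apply (fun _ : Cn 2 => -(Complex.I/2)) = fun _ : Cn 2 => 0 := by
  funext v
  simp only [CRVectorField.apply, Lfield]
  rw [Fin.sum_univ_two, wirtDBar_const, wirtDBar_const]
  simp

lemma Lapply_zero : Lfield.apply (fun _ : Cn 2 => (0:ℂ)) = fun _ : Cn 2 => 0 := by
  funext v
  simp only [CRVectorField.apply, Lfield]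
  rw [Fin.sum_univ_two, wirtDBar_const, wirtDBar_const]
  simp

lemma Lapply_cf0'_at0 : Lfield.apply (fun w : Cn 2 => -1 - 4*(RX (w 0)*RX (w 0)+RY (w 0)*RY (w 0)))
    (0 : Cn 2) = 0 := by
  simp only [CRVectorField.apply, Lfield]
  rw [Fin.sum_univ_two, bar0' 0 0, bar0' 0 1]
  simp [Lcoeff]

lemma Lapply_cf1'_at0 : Lfield.apply (fun w : Cn 2 => Complex.I/2 * RX (w 0))
    (0 : Cn 2) = Complex.I/4 := by
  simp only [CRVectorField.apply, Lfield]
  rw [Fin.sum_univ_two, bar1' 0 0, bar1' 0 1]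
  simp [Lcoeff]

@[simp] lemma CRApplyList_nil {N : ℕ} {M : Set (Cn N)} {p : Cn N} (g : Cn N → ℂ) :
    CRApplyList ([] : List (CRVectorField M p)) g = g := rfl

@[simp] lemma CRApplyList_cons {N : ℕ} {M : Set (Cn N)} {p : Cn N}
    (L : CRVectorField M p) (Ls : List (CRVectorField M p)) (g : Cn N → ℂ) :
    CRApplyList (L :: Ls) g = L.apply (CRApplyList Ls g) := rfl

/-- The generating set of vectors in the finite nondegeneracy condition. -/
def GenSet (s t : ℝ) : Set (Fin 3 → ℂ) :=
  { v : Fin 3 → ℂ | ∃ (Ls : List (CRVectorField Mex (0:Cn 2))) (ρ' : Cn 3 → ℝ) (U' : Set (Cn 3)),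
      Ls.length ≤ 2 ∧ IsOpen U' ∧ Hex s t (0:Cn 2) ∈ U' ∧ AnalyticOnNhd ℝ ρ' U' ∧
      (∀ w ∈ Mex' ∩ U', ρ' w = 0) ∧
      v = fun j => CRApplyList Ls (fun z => wirtD ρ' (Hex s t z) j) (0:Cn 2) }

lemma mem0 (s t : ℝ) : (![0, 0, -(Complex.I/2)] : Fin 3 → ℂ) ∈ GenSet s t := by
  refine ⟨[], rho', Set.univ, by simp, isOpen_univ, Set.mem_univ _, rho'_analytic, rho'_vanish, ?_⟩
  funext j
  fin_cases j <;>
    simp [wirtD_rho'_0, wirtD_rho'_1, wirtD_rho'_2,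
      show (Hex s t (0:Cn 2)) 0 = 0 from rfl, show (Hex s t (0:Cn 2)) 1 = (t:ℂ) from rfl]

lemma mem1 (s t : ℝ) : (![-1, 0, 0] : Fin 3 → ℂ) ∈ GenSet s t := by
  refine ⟨[Lfield], rho', Set.univ, by simp, isOpen_univ, Set.mem_univ _, rho'_analytic,
    rho'_vanish, ?_⟩
  funext j
  fin_cases j
  · show (-1 : ℂ) = Lfield.apply (fun z => wirtD rho' (Hex s t z) 0) (0:Cn 2)
    rw [g0_eq s t, Lapply_cf0]
    simp
  · show (0 : ℂ) = Lfield.apply (fun z => wirtD rho' (Hex s t z) 1) (0:Cn 2)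
    rw [g1_eq s t, Lapply_cf1]
    simp
  · show (0 : ℂ) = Lfield.apply (fun z => wirtD rho' (Hex s t z) 2) (0:Cn 2)
    rw [g2_eq s t, Lapply_cf2]

lemma mem2 (s t : ℝ) : (![0, Complex.I/4, 0] : Fin 3 → ℂ) ∈ GenSet s t := by
  refine ⟨[Lfield, Lfield], rho', Set.univ, by simp, isOpen_univ, Set.mem_univ _, rho'_analytic,
    rho'_vanish, ?_⟩
  funext j
  fin_cases j
  · show (0 : ℂ) = Lfield.apply (Lfield.apply (fun z => wirtD rho' (Hex s t z) 0)) (0:Cn 2)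
    rw [g0_eq s t, Lapply_cf0, Lapply_cf0'_at0]
  · show (Complex.I/4 : ℂ) = Lfield.apply (Lfield.apply (fun z => wirtD rho' (Hex s t z) 1)) (0:Cn 2)
    rw [g1_eq s t, Lapply_cf1, Lapply_cf1'_at0]
  · show (0 : ℂ) = Lfield.apply (Lfield.apply (fun z => wirtD rho' (Hex s t z) 2)) (0:Cn 2)
    rw [g2_eq s t, Lapply_cf2, Lapply_zero]
/-- **Example 6.2.** For every `(s,t) ∈ ℝ²` the map `H_{s,t}(z,w) = (z,t,w+s)` is an entire
holomorphic map sending `M = {Im w = |z|² + |z|⁴}` into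
`M' = {Im w = |z₁|² + |z₁|⁴ + (Re z₁)² Im z₂}` which is finitely nondegenerate of order at
most `2` at `0`. -/
theorem Hst_maps_M_to_M'_finitely_nondegenerate (s t : ℝ) :
    Differentiable ℂ (Hex s t) ∧ (∀ v ∈ Mex, Hex s t v ∈ Mex') ∧
      FinNondeg Mex (0 : Cn 2) Mex' 2 (Hex s t) := by
  refine ⟨?_, ?_, ?_⟩
  · -- holomorphy
    have hF : Differentiable ℂ (fun v : Cn 2 => (![v 0, (t:ℂ), v 1 + (s:ℂ)] : Fin 3 → ℂ)) := by
      rw [differentiable_pi]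
      intro i
      fin_cases i
      · exact (EuclideanSpace.proj (0 : Fin 2) : Cn 2 →L[ℂ] ℂ).differentiable
      · exact differentiable_const _
      · exact ((EuclideanSpace.proj (1 : Fin 2) : Cn 2 →L[ℂ] ℂ).differentiable).add_const _
    exact ((PiLp.continuousLinearEquiv 2 ℂ
      (fun _ : Fin 3 => ℂ)).symm.toContinuousLinearMap.differentiable).comp hF
  · -- maps Mex into Mex'
    intro v hv
    simp only [Mex, Set.mem_setOf_eq] at hv
    simp only [Mex', Set.mem_setOf_eq]
    have e0 : (Hex s t v) 0 = v 0 := rfl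
    have e1 : (Hex s t v) 1 = (t:ℂ) := rfl
    have e2 : (Hex s t v) 2 = v 1 + (s:ℂ) := rfl
    rw [e0, e1, e2]
    simp [hv]
  · -- finite nondegeneracy
    show Submodule.span ℂ (GenSet s t) = ⊤
    rw [Submodule.eq_top_iff']
    intro x
    have mem : (2*Complex.I*(x 2)) • (![0, 0, -(Complex.I/2)] : Fin 3 → ℂ)
        + (-(x 0)) • (![-1, 0, 0] : Fin 3 → ℂ)
        + (-(4*Complex.I*(x 1))) • (![0, Complex.I/4, 0] : Fin 3 → ℂ)
          ∈ Submodule.span ℂ (GenSet s t) := by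
      refine Submodule.add_mem _ (Submodule.add_mem _ ?_ ?_) ?_ <;>
        exact Submodule.smul_mem _ _ (Submodule.subset_span (by
          first
          | exact mem0 s t
          | exact mem1 s t
          | exact mem2 s t))
    have hx : x = (2*Complex.I*(x 2)) • (![0, 0, -(Complex.I/2)] : Fin 3 → ℂ)
        + (-(x 0)) • (![-1, 0, 0] : Fin 3 → ℂ)
        + (-(4*Complex.I*(x 1))) • (![0, Complex.I/4, 0] : Fin 3 → ℂ) := by
      funext j
      fin_cases j
      · simp
      · simp
        linear_combination (x 1) * Complex.I_sq
      · simp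
        linear_combination (x 2) * Complex.I_sq
    rwa [← hx] at mem

end
end
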